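/- arXiv:2409.12529 — 2 statements merged into one kernel-verified Lean document; each statement's English description precedes it below -/
import Mathlib

section
/- For every k ≥ 0, the identity s_k = Σ_{n≥0} Σ_{i=0}^{n} ((−1)^{n+1} v^i r^{2n−2i+1}/(2^{n−i} i! (n−i)! (2n−2i+1))) I_{n+k+1} + Σ_{n≥0} ((−1)^n/n!) (v + r²/2)^n J_{n+k} holds in R (the series on the right converges in the coefficientwise topology on R). -/
open Finset

/-- The ring `R` of formal power series over `ℚ` in the variables
`t_0, t_1, …` (indexed by `Sum.inl`) and `s_0, s_1, …` (indexed by `Sum.inr`). -/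
abbrev RBKdV : Type := MvPowerSeries (ℕ ⊕ ℕ) ℚ

/-- The coefficientwise (product of discrete) topology on `R`. -/
noncomputable instance : TopologicalSpace RBKdV :=
  @Pi.topologicalSpace ((ℕ ⊕ ℕ) →₀ ℕ) (fun _ => ℚ) (fun _ => ⊥)

/-- The variable `t_k`. -/
noncomputable def tV (k : ℕ) : RBKdV := MvPowerSeries.X (Sum.inl k)
/-- The variable `s_k`. -/
noncomputable def sV (k : ℕ) : RBKdV := MvPowerSeries.X (Sum.inr k)

/-!
Expand `I_{n+k+1}` and `J_{n+k}` on the right-hand side: the result is a double series whose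
`(n, m)`-th term has order at least `n + m`, hence is summable, and summing it by rows gives the
right-hand side while summing it along the antidiagonals `n + m = N` gives `s_k`. Indeed, the
antidiagonal sums are coefficients of `xᴺ` in products of exponential generating series in an
auxiliary variable `x`: the coefficient of `s_{N+k}` is that of `e^{-wx} e^{wx} = 1`, where
`w = v + r²/2`, and the coefficient of `t_{N+k+1}` is that of `C(x) e^{vx} + e^{-wx} A(x)`, where
`A(x) = e^{vx} P(x)` with `P(x) = ∑ r^{2j+1} xʲ / (2j+1)‼` and `C(x) = -e^{-vx} Q(x)` with
`Q(x) = r ∫₀¹ e^{-x r² u² / 2} du`. Since `Q = e^{-r² x / 2} P`, this vanishes.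
-/

open PowerSeries Filter Topology

theorem PowerSeries.coeff_rescale_exp {A : Type*} [CommRing A] [Algebra ℚ A] (a : A) (n : ℕ) :
    coeff n (rescale a (exp A)) = ((1 : ℚ) / n.factorial) • a ^ n := by
  rw [coeff_rescale, coeff_exp, Algebra.smul_def, mul_comm]

theorem HasSum.sum_antidiagonal {M α : Type*} [AddMonoid M] [HasAntidiagonal M] [AddCommMonoid α]
    [TopologicalSpace α] [ContinuousAdd α] [RegularSpace α] {f : M × M → α} {a : α}
    (h : HasSum f a) : HasSum (fun N => ∑ p ∈ antidiagonal N, f p) a :=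
  (HasAntidiagonal.sigmaAntidiagonalEquivProd.hasSum_iff.2 h).sigma fun N =>
    (antidiagonal N).hasSum f

lemma tendsto_natCast_fst_add_snd_cofinite_nhds_top :
    Tendsto (fun p : ℕ × ℕ => ((p.1 + p.2 : ℕ) : ℕ∞)) cofinite (𝓝 ⊤) := by
  refine ENat.tendsto_nhds_top_iff_natCast_lt.2 fun D => eventually_cofinite.2 <|
    (range (D + 1) ×ˢ range (D + 1) : Finset (ℕ × ℕ)).finite_toSet.subset fun p hp => ?_
  simp only [Set.mem_ofPred_eq, Nat.cast_lt, not_lt] at hp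
  simp only [coe_product, coe_range, Set.mem_prod, Set.mem_Iio]
  omega

namespace MvPowerSeries

variable {σ R : Type*} [Semiring R]

lemma le_order_sum {ι : Type*} {s : Finset ι} {f : ι → MvPowerSeries σ R} {n : ℕ∞}
    (h : ∀ i ∈ s, n ≤ (f i).order) : n ≤ (∑ i ∈ s, f i).order :=
  Finset.sum_induction f (fun g => n ≤ g.order)
    (fun _ _ hf hg => (le_min hf hg).trans min_order_le_add) (by simp) h

lemma le_order_mul_of_le_right {f g : MvPowerSeries σ R} {n : ℕ∞} (h : n ≤ g.order) :
    n ≤ (f * g).order :=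
  h.trans (le_add_self.trans le_order_mul)

lemma le_order_algebra_smul {S : Type*} [CommSemiring S] [Algebra S (MvPowerSeries σ R)] (c : S)
    (f : MvPowerSeries σ R) : f.order ≤ (c • f).order := by
  rw [Algebra.smul_def]
  exact le_order_mul_of_le_right le_rfl

lemma natCast_le_order_pow_mul_pow {f g : MvPowerSeries σ R} (hf : constantCoeff f = 0)
    (hg : constantCoeff g = 0) (i j : ℕ) : ((i + j : ℕ) : ℕ∞) ≤ (f ^ i * g ^ j).order := by
  rw [Nat.cast_add]
  exact (add_le_add (le_order_pow_of_constantCoeff_eq_zero i hf)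
    (le_order_pow_of_constantCoeff_eq_zero j hg)).trans le_order_mul

namespace WithPiTopology

variable [TopologicalSpace R]

theorem summable_of_tendsto_order_cofinite {ι : Type*} {f : ι → MvPowerSeries σ R}
    (h : Tendsto (fun i => (f i).order) cofinite (𝓝 ⊤)) : Summable f :=
  summable_iff_summable_coeff.2 fun d => summable_of_hasFiniteSupport <|
    (eventually_cofinite.1 (ENat.tendsto_nhds_top_iff_natCast_lt.1 h d.degree)).subset
      fun _ hi hlt => hi (coeff_of_lt_order hlt)

end WithPiTopology

end MvPowerSeries

namespace BurgersKdV

lemma two_mul_succ_mul_neg_half_pow_div (a : ℕ) :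
    2 * (a + 1 : ℚ) * ((-1 / 2) ^ (a + 1) / (a + 1).factorial) = -((-1 / 2) ^ a / a.factorial) := by
  rw [Nat.factorial_succ]
  push_cast
  field_simp
  ring

lemma odd_div_doubleFactorial_succ (b : ℕ) :
    (2 * (b + 1) + 1 : ℚ) / (2 * (b + 1) + 1).doubleFactorial =
      1 / (2 * b + 1).doubleFactorial := by
  rw [show 2 * (b + 1) + 1 = 2 * b + 1 + 2 by ring, Nat.doubleFactorial_add_two]
  have : ((2 * b + 1).doubleFactorial : ℚ) ≠ 0 := by positivity
  push_cast
  field_simp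
  ring

/-- Writing `2j + 1 = 2a + (2b + 1)` splits the left-hand side into two sums that telescope
against each other. -/
lemma odd_mul_sum_antidiagonal_neg_half_pow_div (j : ℕ) :
    (2 * j + 1 : ℚ) * ∑ p ∈ antidiagonal j,
        (-1 / 2 : ℚ) ^ p.1 / p.1.factorial / (2 * p.2 + 1).doubleFactorial =
      (-1 / 2) ^ j / j.factorial := by
  cases j with
  | zero => simp
  | succ j =>
    have hsplit : (2 * (j + 1 : ℕ) + 1 : ℚ) * ∑ p ∈ antidiagonal (j + 1),
          (-1 / 2 : ℚ) ^ p.1 / p.1.factorial / (2 * p.2 + 1).doubleFactorial =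
        ∑ p ∈ antidiagonal (j + 1), 2 * (p.1 : ℚ) * ((-1 / 2) ^ p.1 / p.1.factorial) /
          (2 * p.2 + 1).doubleFactorial +
        ∑ p ∈ antidiagonal (j + 1), (-1 / 2 : ℚ) ^ p.1 / p.1.factorial *
          ((2 * p.2 + 1 : ℚ) / (2 * p.2 + 1).doubleFactorial) := by
      simp only [Finset.mul_sum, ← Finset.sum_add_distrib]
      refine Finset.sum_congr rfl fun p hp => ?_
      rw [← HasAntidiagonal.mem_antidiagonal.1 hp]
      push_cast
      ring
    rw [hsplit, Finset.Nat.sum_antidiagonal_succ, Finset.Nat.sum_antidiagonal_succ']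
    simp only [Nat.cast_add, Nat.cast_one, two_mul_succ_mul_neg_half_pow_div,
      odd_div_doubleFactorial_succ]
    simp only [Nat.cast_zero, mul_zero, zero_mul, zero_div, zero_add, neg_div,
      Finset.sum_neg_distrib, mul_one_div, Nat.doubleFactorial, Nat.cast_one, div_one]
    ring

lemma sum_antidiagonal_neg_half_pow_div (j : ℕ) :
    ∑ p ∈ antidiagonal j, (-1 / 2 : ℚ) ^ p.1 / p.1.factorial / (2 * p.2 + 1).doubleFactorial =
      (-1 / 2) ^ j / j.factorial / (2 * j + 1) := by
  rw [eq_div_iff (by positivity), mul_comm, odd_mul_sum_antidiagonal_neg_half_pow_div]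

lemma sum_antidiagonal_neg_one_pow_div_factorial_mul (N : ℕ) :
    ∑ p ∈ antidiagonal N, (-1 : ℚ) ^ p.1 / p.1.factorial * (1 / p.2.factorial) =
      if N = 0 then 1 else 0 := by
  have h := congrArg (coeff N) (exp_mul_exp_eq_exp_add (A := ℚ) (-1) 1)
  rw [coeff_mul, neg_add_cancel, rescale_zero_apply, coeff_C] at h
  simp only [coeff_rescale_exp, smul_eq_mul, one_pow, mul_one, constantCoeff_exp] at h
  rw [← h]
  refine Finset.sum_congr rfl fun p _ => ?_
  ring

variable {A : Type*} [CommRing A] [Algebra ℚ A]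

noncomputable def addHalfSq (v r : A) : A := v + ((1 : ℚ) / 2) • r ^ 2

/-- The coefficient of `t_{n+k+1}` in `J_k`. -/
noncomputable def jCoeff (v r : A) (n : ℕ) : A :=
  ∑ i ∈ range (n + 1),
    ((1 : ℚ) / (i.factorial * (2 * n - 2 * i + 1).doubleFactorial)) •
      (v ^ i * r ^ (2 * n - 2 * i + 1))

/-- The coefficient of `I_{n+k+1}` in the expansion of `s_k`. -/
noncomputable def invCoeff (v r : A) (n : ℕ) : A :=
  ∑ i ∈ range (n + 1),
    ((-1 : ℚ) ^ (n + 1) / (2 ^ (n - i) * i.factorial * (n - i).factorial * (2 * n - 2 * i + 1))) •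
      (v ^ i * r ^ (2 * n - 2 * i + 1))

noncomputable def oddSeries (r : A) : A⟦X⟧ :=
  mk fun j => ((1 : ℚ) / (2 * j + 1).doubleFactorial) • r ^ (2 * j + 1)

noncomputable def gaussSeries (r : A) : A⟦X⟧ :=
  mk fun j => ((-1 / 2 : ℚ) ^ j / j.factorial / (2 * j + 1)) • r ^ (2 * j + 1)

lemma rescale_exp_mul_oddSeries (r : A) :
    rescale (-(((1 : ℚ) / 2) • r ^ 2)) (exp A) * oddSeries r = gaussSeries r := by
  ext j
  rw [coeff_mul, gaussSeries, coeff_mk, ← sum_antidiagonal_neg_half_pow_div, Finset.sum_smul]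
  refine Finset.sum_congr rfl fun p hp => ?_
  rw [HasAntidiagonal.mem_antidiagonal] at hp
  rw [coeff_rescale_exp, oddSeries, coeff_mk, neg_pow, smul_pow, ← pow_mul, smul_mul_smul_comm,
    ← hp, show 2 * (p.1 + p.2) + 1 = 2 * p.1 + (2 * p.2 + 1) by ring, pow_add]
  simp only [Algebra.smul_def, div_eq_mul_inv, map_mul, map_pow, map_neg, map_one]
  ring

lemma mk_jCoeff (v r : A) : mk (jCoeff v r) = rescale v (exp A) * oddSeries r := by
  ext n
  rw [coeff_mk, coeff_mul, jCoeff, Finset.Nat.sum_antidiagonal_eq_sum_range_succ_mk]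
  refine Finset.sum_congr rfl fun i hi => ?_
  obtain ⟨j, rfl⟩ := Nat.exists_eq_add_of_le (Nat.lt_succ_iff.1 (mem_range.1 hi))
  rw [coeff_rescale_exp, oddSeries, coeff_mk, Nat.add_sub_cancel_left,
    show 2 * (i + j) - 2 * i = 2 * j by omega]
  simp only [Algebra.smul_def, div_eq_mul_inv, mul_inv, map_mul, map_one]
  ring

lemma mk_invCoeff (v r : A) : mk (invCoeff v r) = -(rescale (-v) (exp A) * gaussSeries r) := by
  ext n
  rw [coeff_mk, map_neg, coeff_mul, invCoeff, ← Finset.sum_neg_distrib,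
    Finset.Nat.sum_antidiagonal_eq_sum_range_succ_mk]
  refine Finset.sum_congr rfl fun i hi => ?_
  obtain ⟨j, rfl⟩ := Nat.exists_eq_add_of_le (Nat.lt_succ_iff.1 (mem_range.1 hi))
  rw [coeff_rescale_exp, gaussSeries, coeff_mk, Nat.add_sub_cancel_left,
    show 2 * (i + j) - 2 * i = 2 * j by omega,
    show (2 * ((i + j : ℕ) : ℚ) - 2 * i + 1) = 2 * j + 1 by push_cast; ring, neg_pow]
  simp only [Algebra.smul_def, div_eq_mul_inv, mul_inv, ← inv_pow, map_mul, map_pow, map_neg,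
    map_one]
  ring

lemma mk_invCoeff_mul_add_mul_mk_jCoeff (v r : A) :
    mk (invCoeff v r) * rescale v (exp A) + rescale (-addHalfSq v r) (exp A) * mk (jCoeff v r) =
      0 := by
  rw [mk_invCoeff, mk_jCoeff, ← rescale_exp_mul_oddSeries, addHalfSq, neg_add,
    ← exp_mul_exp_eq_exp_add]
  ring

lemma sum_antidiagonal_invCoeff_add_jCoeff (v r : A) (N : ℕ) :
    ∑ p ∈ antidiagonal N, (((1 : ℚ) / p.2.factorial) • (invCoeff v r p.1 * v ^ p.2) +
      ((-1 : ℚ) ^ p.1 / p.1.factorial) • (addHalfSq v r ^ p.1 * jCoeff v r p.2)) = 0 := by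
  have h := congrArg (coeff N) (mk_invCoeff_mul_add_mul_mk_jCoeff v r)
  rw [map_add, coeff_mul, coeff_mul, ← Finset.sum_add_distrib, map_zero] at h
  rw [← h]
  refine Finset.sum_congr rfl fun p _ => ?_
  simp only [coeff_mk, coeff_rescale_exp, neg_pow (addHalfSq v r), Algebra.smul_def,
    div_eq_mul_inv, map_mul, map_pow, map_neg, map_one]
  ring

/-- The `(n, m)`-th term of the double series obtained by expanding `I_{n+k+1}` and `J_{n+k}` in
the right-hand side of the inversion formula. -/
noncomputable def inversionTerm (v r : A) (t s : ℕ → A) (k : ℕ) (p : ℕ × ℕ) : A :=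
  invCoeff v r p.1 * (((1 : ℚ) / p.2.factorial) • (t (p.2 + (p.1 + k + 1)) * v ^ p.2)) +
    ((-1 : ℚ) ^ p.1 / p.1.factorial) • (addHalfSq v r ^ p.1 *
      (t (p.2 + (p.1 + k) + 1) * jCoeff v r p.2 +
        ((1 : ℚ) / p.2.factorial) • (s (p.2 + (p.1 + k)) * addHalfSq v r ^ p.2)))

lemma inversionTerm_eq_of_mem_antidiagonal (v r : A) (t s : ℕ → A) (k : ℕ) {N : ℕ} {p : ℕ × ℕ}
    (hp : p ∈ antidiagonal N) :
    inversionTerm v r t s k p =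
      t (N + k + 1) * (((1 : ℚ) / p.2.factorial) • (invCoeff v r p.1 * v ^ p.2) +
        ((-1 : ℚ) ^ p.1 / p.1.factorial) • (addHalfSq v r ^ p.1 * jCoeff v r p.2)) +
      ((-1 : ℚ) ^ p.1 / p.1.factorial * (1 / p.2.factorial)) • (s (N + k) * addHalfSq v r ^ N) := by
  rw [HasAntidiagonal.mem_antidiagonal] at hp
  rw [inversionTerm, ← hp, show p.2 + (p.1 + k + 1) = p.1 + p.2 + k + 1 by ring,
    show p.2 + (p.1 + k) = p.1 + p.2 + k by ring, pow_add]
  simp only [Algebra.smul_def, map_mul]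
  ring

lemma sum_antidiagonal_inversionTerm (v r : A) (t s : ℕ → A) (k N : ℕ) :
    ∑ p ∈ antidiagonal N, inversionTerm v r t s k p = if N = 0 then s k else 0 := by
  rw [Finset.sum_congr rfl fun p hp => inversionTerm_eq_of_mem_antidiagonal v r t s k hp,
    Finset.sum_add_distrib, ← Finset.mul_sum, sum_antidiagonal_invCoeff_add_jCoeff, mul_zero,
    zero_add, ← Finset.sum_smul, sum_antidiagonal_neg_one_pow_div_factorial_mul]
  split_ifs with hN
  · simp [hN]
  · exact zero_smul ℚ _

section Topology

variable [TopologicalSpace A] [IsTopologicalRing A]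

lemma hasSum_inversionTerm_fiber {v r : A} {t s I J : ℕ → A}
    (hI : ∀ k, HasSum (fun n => ((1 : ℚ) / n.factorial) • (t (n + k) * v ^ n)) (I k))
    (hJ : ∀ k, HasSum (fun n => t (n + k + 1) * jCoeff v r n +
      ((1 : ℚ) / n.factorial) • (s (n + k) * addHalfSq v r ^ n)) (J k)) (k n : ℕ) :
    HasSum (fun m => inversionTerm v r t s k (n, m))
      (invCoeff v r n * I (n + k + 1) +
        ((-1 : ℚ) ^ n / n.factorial) • (addHalfSq v r ^ n * J (n + k))) :=
  ((hI (n + k + 1)).mul_left (invCoeff v r n)).add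
    (((hJ (n + k)).mul_left (addHalfSq v r ^ n)).const_smul ((-1 : ℚ) ^ n / n.factorial))

theorem hasSum_invCoeff_mul_add [T2Space A] [RegularSpace A] {v r : A} {t s I J : ℕ → A}
    (hI : ∀ k, HasSum (fun n => ((1 : ℚ) / n.factorial) • (t (n + k) * v ^ n)) (I k))
    (hJ : ∀ k, HasSum (fun n => t (n + k + 1) * jCoeff v r n +
      ((1 : ℚ) / n.factorial) • (s (n + k) * addHalfSq v r ^ n)) (J k)) (k : ℕ)
    (hsum : Summable (inversionTerm v r t s k)) :
    HasSum (fun n => invCoeff v r n * I (n + k + 1) +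
      ((-1 : ℚ) ^ n / n.factorial) • (addHalfSq v r ^ n * J (n + k))) (s k) := by
  obtain ⟨a, ha⟩ := hsum
  have ha_eq : a = s k := by
    refine ha.sum_antidiagonal.unique ?_
    simp_rw [sum_antidiagonal_inversionTerm]
    exact hasSum_ite_eq 0 (s k)
  exact ha_eq ▸ ha.prod_fiberwise (hasSum_inversionTerm_fiber hI hJ k)

end Topology

section MvPowerSeries

open MvPowerSeries

variable {σ R : Type*} [CommRing R] [Algebra ℚ R] {v r : MvPowerSeries σ R}

lemma constantCoeff_addHalfSq (hv : constantCoeff v = 0) (hr : constantCoeff r = 0) :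
    constantCoeff (addHalfSq v r) = 0 := by
  rw [addHalfSq, map_add, hv, Algebra.smul_def, map_mul, map_pow, hr]
  simp

lemma natCast_le_order_jCoeff (hv : constantCoeff v = 0) (hr : constantCoeff r = 0) (n : ℕ) :
    (n : ℕ∞) ≤ (jCoeff v r n).order :=
  le_order_sum fun i hi => (Nat.cast_le.2 (by rw [mem_range] at hi; omega)).trans <|
    (natCast_le_order_pow_mul_pow hv hr i (2 * n - 2 * i + 1)).trans (le_order_algebra_smul _ _)

lemma natCast_le_order_invCoeff (hv : constantCoeff v = 0) (hr : constantCoeff r = 0) (n : ℕ) :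
    (n : ℕ∞) ≤ (invCoeff v r n).order :=
  le_order_sum fun i hi => (Nat.cast_le.2 (by rw [mem_range] at hi; omega)).trans <|
    (natCast_le_order_pow_mul_pow hv hr i (2 * n - 2 * i + 1)).trans (le_order_algebra_smul _ _)

lemma natCast_le_order_inversionTerm (hv : constantCoeff v = 0) (hr : constantCoeff r = 0)
    (t s : ℕ → MvPowerSeries σ R) (k : ℕ) (p : ℕ × ℕ) :
    ((p.1 + p.2 : ℕ) : ℕ∞) ≤ (inversionTerm v r t s k p).order := by
  have hw := constantCoeff_addHalfSq hv hr
  rw [Nat.cast_add]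
  refine (le_min ?_ ?_).trans min_order_le_add
  · refine (add_le_add (natCast_le_order_invCoeff hv hr p.1) ?_).trans le_order_mul
    exact (le_order_mul_of_le_right (le_order_pow_of_constantCoeff_eq_zero _ hv)).trans
      (le_order_algebra_smul _ _)
  · refine le_trans ?_ (le_order_algebra_smul _ _)
    refine (add_le_add (le_order_pow_of_constantCoeff_eq_zero _ hw) ?_).trans le_order_mul
    refine (le_min ?_ ?_).trans min_order_le_add
    · exact le_order_mul_of_le_right (natCast_le_order_jCoeff hv hr _)
    · exact (le_order_mul_of_le_right (le_order_pow_of_constantCoeff_eq_zero _ hw)).trans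
        (le_order_algebra_smul _ _)

open WithPiTopology in
lemma summable_inversionTerm [TopologicalSpace R] (hv : constantCoeff v = 0)
    (hr : constantCoeff r = 0) (t s : ℕ → MvPowerSeries σ R) (k : ℕ) :
    Summable (inversionTerm v r t s k) :=
  summable_of_tendsto_order_cofinite <|
    tendsto_nhds_top_mono tendsto_natCast_fst_add_snd_cofinite_nhds_top <|
      Eventually.of_forall (natCast_le_order_inversionTerm hv hr t s k)

end MvPowerSeries

end BurgersKdV

theorem stmt3_general (v r : RBKdV)
    (hv : MvPowerSeries.constantCoeff (σ := ℕ ⊕ ℕ) (R := ℚ) v = 0)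
    (hr : MvPowerSeries.constantCoeff (σ := ℕ ⊕ ℕ) (R := ℚ) r = 0)
    (I J : ℕ → RBKdV)
    (hI : ∀ k, HasSum (fun n : ℕ => ((1 : ℚ) / n.factorial) • (tV (n + k) * v ^ n)) (I k))
    (hJ : ∀ k, HasSum (fun n : ℕ =>
        tV (n + k + 1) *
          ∑ i ∈ Finset.range (n + 1),
            ((1 : ℚ) / (i.factorial * (2 * n - 2 * i + 1).doubleFactorial)) •
              (v ^ i * r ^ (2 * n - 2 * i + 1)) +
        ((1 : ℚ) / n.factorial) • (sV (n + k) * (v + ((1 : ℚ) / 2) • r ^ 2) ^ n)) (J k))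
    (k : ℕ) :
    HasSum (fun n : ℕ =>
      (∑ i ∈ Finset.range (n + 1),
        ((-1 : ℚ) ^ (n + 1) /
            (2 ^ (n - i) * i.factorial * (n - i).factorial * (2 * n - 2 * i + 1))) •
          (v ^ i * r ^ (2 * n - 2 * i + 1))) * I (n + k + 1) +
      ((-1 : ℚ) ^ n / n.factorial) • ((v + ((1 : ℚ) / 2) • r ^ 2) ^ n * J (n + k)))
      (sV k) := by
  -- the topology of `RBKdV` is the product of discrete topologies on `ℚ`
  let : TopologicalSpace ℚ := ⊥
  have : DiscreteTopology ℚ := ⟨rfl⟩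
  have : IsTopologicalRing RBKdV := MvPowerSeries.WithPiTopology.instIsTopologicalRing _ _
  have : T3Space RBKdV := inferInstanceAs (T3Space ((ℕ ⊕ ℕ →₀ ℕ) → ℚ))
  exact BurgersKdV.hasSum_invCoeff_mul_add hI hJ k
    (BurgersKdV.summable_inversionTerm hv hr tV sV k)

/-- Let `v, r ∈ R` have zero constant term, and let
`I_k = Σ_{n≥0} t_{n+k} v^n/n!` and
`J_k = Σ_{n≥0} t_{n+k+1} Σ_{i=0}^{n} v^i r^{2n−2i+1}/(i!(2n−2i+1)!!)
      + Σ_{n≥0} (s_{n+k}/n!)(v+r²/2)^n`,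
the sums converging in the coefficientwise topology.
If `I_0 = v` and `J_0 = r`, then for every `k ≥ 0` the identity
`s_k = Σ_{n≥0} Σ_{i=0}^{n} ((−1)^{n+1} v^i r^{2n−2i+1}/(2^{n−i} i! (n−i)! (2n−2i+1))) I_{n+k+1}
     + Σ_{n≥0} ((−1)^n/n!) (v + r²/2)^n J_{n+k}` holds in `R`, the series on the
right converging in the coefficientwise topology. -/
theorem stmt3 (v r : RBKdV)
    (hv : MvPowerSeries.constantCoeff (σ := ℕ ⊕ ℕ) (R := ℚ) v = 0)
    (hr : MvPowerSeries.constantCoeff (σ := ℕ ⊕ ℕ) (R := ℚ) r = 0)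
    (I J : ℕ → RBKdV)
    (hI : ∀ k, HasSum (fun n : ℕ => ((1 : ℚ) / n.factorial) • (tV (n + k) * v ^ n)) (I k))
    (hJ : ∀ k, HasSum (fun n : ℕ =>
        tV (n + k + 1) *
          ∑ i ∈ Finset.range (n + 1),
            ((1 : ℚ) / (i.factorial * (2 * n - 2 * i + 1).doubleFactorial)) •
              (v ^ i * r ^ (2 * n - 2 * i + 1)) +
        ((1 : ℚ) / n.factorial) • (sV (n + k) * (v + ((1 : ℚ) / 2) • r ^ 2) ^ n)) (J k))
    (hI0 : I 0 = v) (hJ0 : J 0 = r) (k : ℕ) :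
    HasSum (fun n : ℕ =>
      (∑ i ∈ Finset.range (n + 1),
        ((-1 : ℚ) ^ (n + 1) /
            (2 ^ (n - i) * i.factorial * (n - i).factorial * (2 * n - 2 * i + 1))) •
          (v ^ i * r ^ (2 * n - 2 * i + 1))) * I (n + k + 1) +
      ((-1 : ℚ) ^ n / n.factorial) • ((v + ((1 : ℚ) / 2) • r ^ 2) ^ n * J (n + k)))
      (sV k) :=
  stmt3_general v r hv hr I J hI hJ k
end

section
/- Set U_1 := 1 − I_1 and U_2 := 1 − I_1 − J_0 J_1 in K. Then the following inversion identities hold in K: v_1 = 1/U_1; r_1 = J_1/(U_1 U_2); v_2 = I_2/U_1³; and r_2 = J_2/U_2³ + J_1³/(U_1² U_2³) + J_1 I_2 ( 1/(U_1 U_2³) + 1/(U_1² U_2²) + 1/(U_1³ U_2) ). -/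
open Finset

/-- The field `K`: field of fractions of `ℚ[v_0, r_0, v_1, r_1, …]`. -/
abbrev KBKdV : Type := FractionRing (MvPolynomial (ℕ ⊕ ℕ) ℚ)

/-- The indeterminate `v_k`, viewed in `K`. -/
noncomputable def vK (k : ℕ) : KBKdV :=
  algebraMap (MvPolynomial (ℕ ⊕ ℕ) ℚ) KBKdV (MvPolynomial.X (Sum.inl k))

/-- The indeterminate `r_k`, viewed in `K`. -/
noncomputable def rK (k : ℕ) : KBKdV :=
  algebraMap (MvPolynomial (ℕ ⊕ ℕ) ℚ) KBKdV (MvPolynomial.X (Sum.inr k))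

/-! Both recursions can be solved in closed form up to second order: with `W := v₁ + r₀ r₁`,
`I₁ = 1 - v₁⁻¹`, `I₂ = v₂ / v₁³`, `J₁ = r₁ / (v₁ W)`, and `J₂` is obtained by differentiating `J₁`.
In particular `U₁ = v₁⁻¹` and `U₂ = W⁻¹`, after which each inversion identity is a rational
function identity in `v₁, v₂, r₀, r₁, r₂`. -/

section ClosedForms

/- The `R`-module structure of `K` is a separate argument, as in `Derivation R K K` itself: on
`FractionRing`, the scalar action of `ℚ` is not definitionally the one of its `ℚ`-algebra
structure. -/
set_option linter.overlappingInstances false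

variable {R K : Type*} [CommRing R] [Field K] [Algebra R K] [Module R K] (D : Derivation R K K)
  {v r I J : ℕ → K}

theorem I_one_eq (hv : ∀ k, D (v k) = v (k + 1)) (hv₁ : v 1 ≠ 0) (hI₀ : I 0 = v 0)
    (hI : ∀ k : ℕ, I (k + 1) = (D (I k) - if k = 0 then 1 else 0) / v 1) :
    I 1 = 1 - (v 1)⁻¹ := by
  rw [hI 0, hI₀, hv 0, if_pos rfl]
  field_simp

theorem I_two_eq (hv : ∀ k, D (v k) = v (k + 1)) (hv₁ : v 1 ≠ 0) (hI₀ : I 0 = v 0)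
    (hI : ∀ k : ℕ, I (k + 1) = (D (I k) - if k = 0 then 1 else 0) / v 1) :
    I 2 = v 2 / v 1 ^ 3 := by
  rw [hI 1, I_one_eq D hv hv₁ hI₀ hI, map_sub, Derivation.map_one_eq_zero,
    Derivation.leibniz_inv, hv 1, if_neg one_ne_zero, smul_eq_mul]
  field_simp
  ring

theorem J_one_eq (hv : ∀ k, D (v k) = v (k + 1)) (hr : ∀ k, D (r k) = r (k + 1))
    (hv₁ : v 1 ≠ 0) (hI₀ : I 0 = v 0) (hJ₀ : J 0 = r 0)
    (hI : ∀ k : ℕ, I (k + 1) = (D (I k) - if k = 0 then 1 else 0) / v 1)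
    (hJ : ∀ k : ℕ, J (k + 1) = (D (J k) - r 1 * I (k + 1)) / (v 1 + r 0 * r 1)) :
    J 1 = r 1 / (v 1 * (v 1 + r 0 * r 1)) := by
  rw [hJ 0, hJ₀, hr 0, I_one_eq D hv hv₁ hI₀ hI]
  field_simp
  ring

theorem J_two_eq (hv : ∀ k, D (v k) = v (k + 1)) (hr : ∀ k, D (r k) = r (k + 1))
    (hv₁ : v 1 ≠ 0) (hW : v 1 + r 0 * r 1 ≠ 0) (hI₀ : I 0 = v 0) (hJ₀ : J 0 = r 0)
    (hI : ∀ k : ℕ, I (k + 1) = (D (I k) - if k = 0 then 1 else 0) / v 1)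
    (hJ : ∀ k : ℕ, J (k + 1) = (D (J k) - r 1 * I (k + 1)) / (v 1 + r 0 * r 1)) :
    J 2 = ((r 2 - r 1 * (v 2 / v 1 + (v 2 + r 1 ^ 2 + r 0 * r 2) / (v 1 + r 0 * r 1)))
        / (v 1 * (v 1 + r 0 * r 1)) - r 1 * v 2 / v 1 ^ 3) / (v 1 + r 0 * r 1) := by
  have hDW : D (v 1 + r 0 * r 1) = v 2 + r 1 ^ 2 + r 0 * r 2 := by
    rw [map_add, Derivation.leibniz, hv 1, hr 0, hr 1, smul_eq_mul, smul_eq_mul]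
    ring
  rw [hJ 1, J_one_eq D hv hr hv₁ hI₀ hJ₀ hI hJ, I_two_eq D hv hv₁ hI₀ hI,
    Derivation.leibniz_div, Derivation.leibniz, hr 1, hv 1, hDW]
  simp only [smul_eq_mul]
  field_simp
  ring

end ClosedForms

theorem vK_ne_zero (k : ℕ) : vK k ≠ 0 :=
  (map_ne_zero_iff _ (IsFractionRing.injective _ _)).mpr (MvPolynomial.X_ne_zero _)

theorem vK_one_add_rK_zero_mul_rK_one_ne_zero : vK 1 + rK 0 * rK 1 ≠ 0 := by
  rw [vK, rK, rK, ← map_mul, ← map_add, Ne,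
    map_eq_zero_iff _ (IsFractionRing.injective _ _)]
  intro h
  simpa using congrArg (MvPolynomial.eval fun i => if i = Sum.inl 1 then (1 : ℚ) else 0) h

/-- With `U_1 := 1 − I_1` and `U_2 := 1 − I_1 − J_0 J_1`, the inversion identities
`v_1 = 1/U_1`, `r_1 = J_1/(U_1 U_2)`, `v_2 = I_2/U_1³` and
`r_2 = J_2/U_2³ + J_1³/(U_1² U_2³) + J_1 I_2 (1/(U_1 U_2³) + 1/(U_1² U_2²) + 1/(U_1³ U_2))`
hold in `K`. -/
theorem stmt10
    (Dx : Derivation ℚ KBKdV KBKdV)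
    (hDxv : ∀ k, Dx (vK k) = vK (k + 1)) (hDxr : ∀ k, Dx (rK k) = rK (k + 1))
    (I J : ℕ → KBKdV) (hI0 : I 0 = vK 0) (hJ0 : J 0 = rK 0)
    (hI : ∀ k : ℕ, I (k + 1) = (Dx (I k) - if k = 0 then 1 else 0) / vK 1)
    (hJ : ∀ k : ℕ, J (k + 1) = (Dx (J k) - rK 1 * I (k + 1)) / (vK 1 + rK 0 * rK 1)) :
    vK 1 = (1 - I 1)⁻¹ ∧
    rK 1 = J 1 / ((1 - I 1) * (1 - I 1 - J 0 * J 1)) ∧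
    vK 2 = I 2 / (1 - I 1) ^ 3 ∧
    rK 2 = J 2 / (1 - I 1 - J 0 * J 1) ^ 3 +
      (J 1) ^ 3 / ((1 - I 1) ^ 2 * (1 - I 1 - J 0 * J 1) ^ 3) +
      J 1 * I 2 * (((1 - I 1) * (1 - I 1 - J 0 * J 1) ^ 3)⁻¹ +
        ((1 - I 1) ^ 2 * (1 - I 1 - J 0 * J 1) ^ 2)⁻¹ +
        ((1 - I 1) ^ 3 * (1 - I 1 - J 0 * J 1))⁻¹) := by
  have hv₁ := vK_ne_zero 1
  have hW := vK_one_add_rK_zero_mul_rK_one_ne_zero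
  have hI₁ := I_one_eq Dx hDxv hv₁ hI0 hI
  have hI₂ := I_two_eq Dx hDxv hv₁ hI0 hI
  have hJ₁ := J_one_eq Dx hDxv hDxr hv₁ hI0 hJ0 hI hJ
  have hJ₂ := J_two_eq Dx hDxv hDxr hv₁ hW hI0 hJ0 hI hJ
  have hU₁ : 1 - I 1 = (vK 1)⁻¹ := by rw [hI₁, sub_sub_cancel]
  have hU₂ : 1 - I 1 - J 0 * J 1 = (vK 1 + rK 0 * rK 1)⁻¹ := by
    rw [hU₁, hJ0, hJ₁]
    field_simp
    ring
  rw [hU₂, hU₁, hJ₁, hI₂, hJ₂]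
  -- `field_simp` would normalise `v₁ + r₀ r₁` to a form that `hW` no longer matches.
  generalize hWdef : vK 1 + rK 0 * rK 1 = W at hW ⊢
  refine ⟨(inv_inv _).symm, by field_simp, by field_simp, ?_⟩
  field_simp
  rw [← hWdef]
  ring
end
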